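/- arXiv:1409.6282 — 4 statements merged into one kernel-verified Lean document; each statement's English description precedes it below -/
import Mathlib

section
/- Let σ be a Lie algebra automorphism of HV, c ∈ ℂ* with cΓ = Γ, τ: Γ → ℂ* a character, and e ∈ ℂ*, such that σ(L_{0,j}) − c^{j−1} L_{0,j} ∈ H for all j ∈ ℤ₊ and σ(H_{α,0}) = τ(α) e H_{cα,0} for all α ∈ Γ. Then σ(H_{α,j}) = τ(α) e c^{j} H_{cα,j} for all α ∈ Γ and j ∈ ℤ₊. -/
/-- The generalized Heisenberg–Virasoro algebra `HV(Γ)`: a complex Lie algebra `V` equipped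
with a basis `{L_{α,i}, H_{α,i} | α ∈ Γ, i ∈ ℤ₊}` satisfying the defining bracket relations
(any term whose second index would be `-1` has coefficient `0`, so truncated subtraction
on `ℕ` is harmless). -/
structure HVData (Γ : AddSubgroup ℂ) (V : Type*) [LieRing V] [LieAlgebra ℂ V] where
  L : Γ → ℕ → V
  H : Γ → ℕ → V
  basis : Module.Basis ((↥Γ × ℕ) ⊕ (↥Γ × ℕ)) ℂ V
  basis_inl : ∀ (α : Γ) (i : ℕ), basis (Sum.inl (α, i)) = L α i
  basis_inr : ∀ (α : Γ) (i : ℕ), basis (Sum.inr (α, i)) = H α i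
  lie_L_L : ∀ (α β : Γ) (i j : ℕ),
    ⁅L α i, L β j⁆ = ((β : ℂ) - (α : ℂ)) • L (α + β) (i + j)
      + ((j : ℂ) - (i : ℂ)) • L (α + β) (i + j - 1)
  lie_L_H : ∀ (α β : Γ) (i j : ℕ),
    ⁅L α i, H β j⁆ = (β : ℂ) • H (α + β) (i + j) + (j : ℂ) • H (α + β) (i + j - 1)
  lie_H_H : ∀ (α β : Γ) (i j : ℕ), ⁅H α i, H β j⁆ = 0

namespace HVData

variable {Γ : AddSubgroup ℂ} {V : Type*} [LieRing V] [LieAlgebra ℂ V]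

/-- The abelian ideal `H` of `HV`, as a submodule. -/
noncomputable def Hspan (hv : HVData Γ V) : Submodule ℂ V :=
  Submodule.span ℂ (Set.range fun p : ↥Γ × ℕ => hv.H p.1 p.2)

/-- The graded piece `HV_α = span{L_{α,i}, H_{α,i} | i ∈ ℤ₊}`. -/
noncomputable def grade (hv : HVData Γ V) (α : Γ) : Submodule ℂ V :=
  Submodule.span ℂ (Set.range (hv.L α) ∪ Set.range (hv.H α))

/-- A derivation `D` has degree `γ` if `D (HV_α) ⊆ HV_{α+γ}` for all `α ∈ Γ`. -/
def HasDegree (hv : HVData Γ V) (D : LieDerivation ℂ V V) (γ : Γ) : Prop :=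
  ∀ α : Γ, ∀ x ∈ hv.grade α, D x ∈ hv.grade (α + γ)

end HVData

/-- The value in `ℂ` of a character `τ : Γ → ℂ*` at `α ∈ Γ`. -/
noncomputable def charVal {Γ : AddSubgroup ℂ} (τ : Multiplicative ↥Γ →* ℂˣ) (α : Γ) : ℂ :=
  (τ (Multiplicative.ofAdd α) : ℂ)

/-!
For `α ≠ 0` we have `H_{α,j} = α⁻¹ [L_{0,j}, H_{α,0}]`; since `H` is abelian, `σ(L_{0,j})` acts on
`σ(H_{α,0}) ∈ H` as `c^{j-1} L_{0,j}` does, which gives the formula. For `α = 0` we have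
`H_{0,j} = [L_{0,j}, H_{0,1}]`, so everything reduces to `σ(H_{0,1})`. It lies in `H`: it commutes
with `σ(H_{α₀,0}) ∈ ℂ* H_{cα₀,0}` for some `α₀ ≠ 0`, and only elements of `H` commute with
`H_{γ,0}`, `γ ≠ 0`. Then `d = σ(H_{0,1}) - c e H_{0,1} ∈ H` satisfies `[L_{0,0}, d] = 0` and
`[L_{0,1}, d] = d`, and comparing coefficients in the basis, by induction on the second index,
forces `d = 0`.
-/

namespace Module.Basis

variable {ι R L : Type*} [CommRing R] [LieRing L] [LieAlgebra R L]

theorem repr_lie_eq_of_forall_basis (b : Basis ι R L) {z : L} {k : ι} (f : L →ₗ[R] R)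
    (h : ∀ i, b.repr ⁅z, b i⁆ k = f (b i)) (x : L) : b.repr ⁅z, x⁆ k = f x :=
  LinearMap.congr_fun (b.ext (f₁ := (b.coord k).comp (LieAlgebra.ad R L z)) h) x

end Module.Basis

namespace HVData

variable {Γ : AddSubgroup ℂ} {V : Type*} [LieRing V] [LieAlgebra ℂ V] (hv : HVData Γ V)

@[simp]
theorem repr_L (α : Γ) (i : ℕ) : hv.basis.repr (hv.L α i) = Finsupp.single (.inl (α, i)) 1 := by
  rw [← hv.basis_inl, Module.Basis.repr_self]

@[simp]
theorem repr_H (α : Γ) (i : ℕ) : hv.basis.repr (hv.H α i) = Finsupp.single (.inr (α, i)) 1 := by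
  rw [← hv.basis_inr, Module.Basis.repr_self]

theorem H_mem_Hspan (α : Γ) (i : ℕ) : hv.H α i ∈ hv.Hspan :=
  Submodule.subset_span ⟨(α, i), rfl⟩

theorem lie_L_zero_H_zero (j : ℕ) (β : Γ) : ⁅hv.L 0 j, hv.H β 0⁆ = (β : ℂ) • hv.H β j := by
  simp [hv.lie_L_H]

theorem lie_L_zero_H_zero_one (j : ℕ) : ⁅hv.L 0 j, hv.H 0 1⁆ = hv.H 0 j := by
  simp [hv.lie_L_H]

theorem lie_eq_zero_of_mem_Hspan {u w : V} (hu : u ∈ hv.Hspan) (hw : w ∈ hv.Hspan) :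
    ⁅u, w⁆ = 0 := by
  have hH : ∀ p : Γ × ℕ, hv.Hspan ≤ LinearMap.ker (LieAlgebra.ad ℂ V (hv.H p.1 p.2)) :=
    fun p => Submodule.span_le.mpr <| Set.range_subset_iff.mpr fun _ => hv.lie_H_H _ _ _ _
  have hu' : hv.Hspan ≤ LinearMap.ker (LieAlgebra.ad ℂ V u) :=
    Submodule.span_le.mpr <| Set.range_subset_iff.mpr fun p => by
      simp [← lie_skew u, show ⁅hv.H p.1 p.2, u⁆ = 0 from hH p hu]
  exact hu' hw

theorem lie_eq_of_sub_mem_Hspan {x x' u : V} (hx : x - x' ∈ hv.Hspan) (hu : u ∈ hv.Hspan) :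
    ⁅x, u⁆ = ⁅x', u⁆ := by
  rw [← sub_eq_zero, ← sub_lie]
  exact hv.lie_eq_zero_of_mem_Hspan hx hu

theorem mem_Hspan_iff {y : V} : y ∈ hv.Hspan ↔ ∀ β i, hv.basis.repr y (.inl (β, i)) = 0 := by
  have hspan : hv.Hspan = Submodule.span ℂ (hv.basis '' Set.range Sum.inr) := by
    rw [Hspan, ← Set.range_comp]
    congr 1
    ext
    simp [hv.basis_inr]
  rw [hspan, Module.Basis.mem_span_image]
  constructor
  · intro h β i
    by_contra hne
    obtain ⟨p, hp⟩ := h (Finsupp.mem_support_iff.mpr hne)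
    cases hp
  · rintro h (⟨β, i⟩ | p) hk
    · exact absurd (h β i) (Finsupp.mem_support_iff.mp hk)
    · exact ⟨p, rfl⟩

theorem repr_lie_L_zero_zero_inr (β : Γ) (i : ℕ) (x : V) :
    hv.basis.repr ⁅hv.L 0 0, x⁆ (.inr (β, i))
      = β * hv.basis.repr x (.inr (β, i)) + (i + 1) * hv.basis.repr x (.inr (β, i + 1)) := by
  refine hv.basis.repr_lie_eq_of_forall_basis
    ((β : ℂ) • hv.basis.coord (.inr (β, i)) + ((i : ℂ) + 1) • hv.basis.coord (.inr (β, i + 1)))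
    ?_ x
  rintro (⟨β', i'⟩ | ⟨β', i'⟩)
  · simp [hv.basis_inl, hv.lie_L_L]
  · simp [hv.basis_inr, hv.lie_L_H, Finsupp.single_apply]
    split_ifs <;> simp_all <;> omega

theorem repr_lie_L_zero_one_inr_zero (β : Γ) (x : V) :
    hv.basis.repr ⁅hv.L 0 1, x⁆ (.inr (β, 0)) = 0 := by
  refine hv.basis.repr_lie_eq_of_forall_basis 0 ?_ x
  rintro (⟨β', i'⟩ | ⟨β', i'⟩)
  · simp [hv.basis_inl, hv.lie_L_L]
  · simp [hv.basis_inr, hv.lie_L_H, Finsupp.single_apply]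

theorem repr_lie_H_zero_inr (γ β : Γ) (i : ℕ) (x : V) :
    hv.basis.repr ⁅hv.H γ 0, x⁆ (.inr (β + γ, i)) = -γ * hv.basis.repr x (.inl (β, i)) := by
  refine hv.basis.repr_lie_eq_of_forall_basis (-(γ : ℂ) • hv.basis.coord (.inl (β, i))) ?_ x
  rintro (⟨β', i'⟩ | ⟨β', i'⟩)
  · rw [hv.basis_inl, ← lie_skew, hv.lie_L_H]
    simp [Finsupp.single_apply]
  · simp [hv.basis_inr, hv.lie_H_H]

theorem eq_zero_of_mem_Hspan_of_lie_L {d : V} (hd : d ∈ hv.Hspan) (h₀ : ⁅hv.L 0 0, d⁆ = 0)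
    (h₁ : ⁅hv.L 0 1, d⁆ = d) : d = 0 := by
  have hinr : ∀ β i, hv.basis.repr d (.inr (β, i)) = 0 := by
    intro β i
    induction i with
    | zero => simpa [h₁] using hv.repr_lie_L_zero_one_inr_zero β d
    | succ i ih =>
      simpa [h₀, ih, Nat.cast_add_one_ne_zero] using hv.repr_lie_L_zero_zero_inr β i d
  refine hv.basis.repr.map_eq_zero_iff.mp (Finsupp.ext ?_)
  rintro (⟨β, i⟩ | ⟨β, i⟩)
  · exact (hv.mem_Hspan_iff.mp hd) β i
  · exact hinr β i

variable (σ : V ≃ₗ⁅ℂ⁆ V)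

theorem map_mem_Hspan {α γ : Γ} (hγ : γ ≠ 0) {t : ℂ} (ht : t ≠ 0)
    (hσH : σ (hv.H α 0) = t • hv.H γ 0) {u : V} (hu : u ∈ hv.Hspan) : σ u ∈ hv.Hspan := by
  have hγu : ⁅hv.H γ 0, σ u⁆ = 0 := by
    have : t • ⁅hv.H γ 0, σ u⁆ = 0 := by
      rw [← smul_lie, ← hσH, ← LieEquiv.map_lie,
        hv.lie_eq_zero_of_mem_Hspan (hv.H_mem_Hspan α 0) hu, map_zero]
    exact (smul_eq_zero.mp this).resolve_left ht
  refine hv.mem_Hspan_iff.mpr fun β i => ?_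
  simpa [hγu, hγ] using hv.repr_lie_H_zero_inr γ β i (σ u)

theorem map_H_of_ne_zero {α γ : Γ} (hα : α ≠ 0) {s t : ℂ} (hσH : σ (hv.H α 0) = t • hv.H γ 0)
    {j : ℕ} (hσL : σ (hv.L 0 j) - s • hv.L 0 j ∈ hv.Hspan) :
    σ (hv.H α j) = (s * t * γ / α) • hv.H γ j := by
  have hαC : (α : ℂ) ≠ 0 := by simpa using hα
  have key : (α : ℂ) • σ (hv.H α j) = (s * t * γ) • hv.H γ j := calc
    (α : ℂ) • σ (hv.H α j) = σ ⁅hv.L 0 j, hv.H α 0⁆ := by rw [lie_L_zero_H_zero, map_smul]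
    _ = ⁅σ (hv.L 0 j), t • hv.H γ 0⁆ := by rw [LieEquiv.map_lie, hσH]
    _ = ⁅s • hv.L 0 j, t • hv.H γ 0⁆ :=
      hv.lie_eq_of_sub_mem_Hspan hσL (Submodule.smul_mem _ _ (hv.H_mem_Hspan γ 0))
    _ = (s * t * γ) • hv.H γ j := by
      rw [smul_lie, lie_smul, lie_L_zero_H_zero, smul_smul, smul_smul]
  rw [div_eq_inv_mul, mul_smul, ← key, inv_smul_smul₀ hαC]

theorem map_H_zero_one {s t : ℂ} (hs : s ≠ 0) (hσL₀ : σ (hv.L 0 0) - s • hv.L 0 0 ∈ hv.Hspan)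
    (hσL₁ : σ (hv.L 0 1) - hv.L 0 1 ∈ hv.Hspan) (hσH : σ (hv.H 0 0) = t • hv.H 0 0)
    (hy : σ (hv.H 0 1) ∈ hv.Hspan) : σ (hv.H 0 1) = (s⁻¹ * t) • hv.H 0 1 := by
  set y := σ (hv.H 0 1)
  have h₀ : ⁅hv.L 0 0, y⁆ = (s⁻¹ * t) • hv.H 0 0 := by
    have : s • ⁅hv.L 0 0, y⁆ = t • hv.H 0 0 := calc
      s • ⁅hv.L 0 0, y⁆ = ⁅σ (hv.L 0 0), y⁆ := by
        rw [← smul_lie, hv.lie_eq_of_sub_mem_Hspan hσL₀ hy]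
      _ = t • hv.H 0 0 := by rw [← LieEquiv.map_lie, lie_L_zero_H_zero_one, hσH]
    rw [mul_smul, ← this, inv_smul_smul₀ hs]
  have h₁ : ⁅hv.L 0 1, y⁆ = y := by
    rw [← hv.lie_eq_of_sub_mem_Hspan hσL₁ hy, ← LieEquiv.map_lie, lie_L_zero_H_zero_one]
  rw [← sub_eq_zero]
  apply hv.eq_zero_of_mem_Hspan_of_lie_L
  · exact sub_mem hy (Submodule.smul_mem _ _ (hv.H_mem_Hspan 0 1))
  · rw [lie_sub, h₀, lie_smul, lie_L_zero_H_zero_one, sub_self]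
  · rw [lie_sub, h₁, lie_smul, lie_L_zero_H_zero_one]

theorem map_H_zero {s t : ℂ} (hσH : σ (hv.H 0 1) = t • hv.H 0 1) {j : ℕ}
    (hσL : σ (hv.L 0 j) - s • hv.L 0 j ∈ hv.Hspan) : σ (hv.H 0 j) = (s * t) • hv.H 0 j := calc
  σ (hv.H 0 j) = ⁅σ (hv.L 0 j), t • hv.H 0 1⁆ := by
    rw [← hσH, ← LieEquiv.map_lie, lie_L_zero_H_zero_one]
  _ = ⁅s • hv.L 0 j, t • hv.H 0 1⁆ :=
    hv.lie_eq_of_sub_mem_Hspan hσL (Submodule.smul_mem _ _ (hv.H_mem_Hspan 0 1))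
  _ = (s * t) • hv.H 0 j := by rw [smul_lie, lie_smul, lie_L_zero_H_zero_one, smul_smul]

end HVData

/-- Let `σ` be an automorphism of `HV`, `c ∈ ℂ*` with `cΓ = Γ`, `τ` a
character, `e ∈ ℂ*`, with `σ(L_{0,j}) ≡ c^{j-1} L_{0,j}` modulo `H` for all `j` and
`σ(H_{α,0}) = τ(α) e H_{cα,0}` for all `α`.  Then `σ(H_{α,j}) = τ(α) e c^j H_{cα,j}` for all
`α ∈ Γ`, `j ∈ ℤ₊`. -/
theorem HV_automorphism_on_H_alpha_j (Γ : AddSubgroup ℂ) (hΓ : Γ ≠ ⊥)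
    {V : Type*} [LieRing V] [LieAlgebra ℂ V] (hv : HVData Γ V)
    (σ : V ≃ₗ⁅ℂ⁆ V) (c : ℂ) (hc0 : c ≠ 0)
    (hcΓ : ∀ x : ℂ, x ∈ Γ ↔ c * x ∈ Γ) (τ : Multiplicative ↥Γ →* ℂˣ)
    (e : ℂ) (he : e ≠ 0)
    (hL : ∀ j : ℕ, σ (hv.L 0 j) - c ^ ((j : ℤ) - 1) • hv.L 0 j ∈ hv.Hspan)
    (hH0 : ∀ α : Γ, σ (hv.H α 0)
        = (charVal τ α * e) • hv.H ⟨c * (α : ℂ), (hcΓ (α : ℂ)).mp α.2⟩ 0) :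
    ∀ (α : Γ) (j : ℕ), σ (hv.H α j)
        = (charVal τ α * e * c ^ j) • hv.H ⟨c * (α : ℂ), (hcΓ (α : ℂ)).mp α.2⟩ j := by
  obtain ⟨α₀, hα₀⟩ := AddSubgroup.ne_bot_iff_exists_ne_zero.mp hΓ
  have hcα : ∀ α : Γ, α ≠ 0 → (⟨c * α, (hcΓ α).mp α.2⟩ : Γ) ≠ 0 := fun α hα h =>
    hα (Subtype.ext (by simpa [hc0] using congrArg Subtype.val h))
  have hc_zero : (⟨c * ((0 : Γ) : ℂ), (hcΓ _).mp (0 : Γ).2⟩ : Γ) = 0 := by ext; simp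
  have hpow : ∀ j : ℕ, c ^ ((j : ℤ) - 1) * c = c ^ j := fun j => by
    rw [← zpow_add_one₀ hc0, sub_add_cancel, zpow_natCast]
  have hτ0 : charVal τ 0 = 1 := by simp [charVal]
  intro α j
  obtain rfl | hα := eq_or_ne α 0
  · have hH01 := hv.map_H_zero_one σ (inv_ne_zero hc0) (by simpa using hL 0) (by simpa using hL 1)
      (by rw [hH0 0, hc_zero, hτ0, one_mul])
      (hv.map_mem_Hspan σ (hcα α₀ hα₀) (mul_ne_zero (Units.ne_zero _) he) (hH0 α₀) (hv.H_mem_Hspan 0 1))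
    rw [hv.map_H_zero σ hH01 (hL j), hc_zero, hτ0, inv_inv, ← hpow j]
    congr 1
    ring
  · rw [hv.map_H_of_ne_zero σ hα (hH0 α) (hL j), ← hpow j]
    have hαC : (α : ℂ) ≠ 0 := by simpa using hα
    congr 1
    field_simp
end

section
/- The second cohomology group of HV with trivial coefficients vanishes: H²(HV, ℂ) = 0. Equivalently, every 2-cocycle ψ on HV is a 2-coboundary, i.e., there exists a linear function f: HV → ℂ with ψ(x,y) = f([x,y]) for all x, y ∈ HV; hence HV has no nontrivial one-dimensional central extensions. -/
/-!
The key observation is that `ad L_{0,0}` acts on each chain `L_{β,0}, L_{β,1}, …` (and likewise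
on the `H`-chains) as `β` plus a lowering operator, `L_{β,i} ↦ β L_{β,i} + i L_{β,i-1}`. Hence
a cocycle `ψ` can be corrected by a coboundary so that `ψ(L_{0,0}, ·) = 0`: one solves a
triangular system along each chain, which is possible as long as `ψ(L_{0,0}, L_{0,0})` and
`ψ(L_{0,0}, H_{0,0})` vanish, and the latter holds because `H_{0,0}` is central and `L_{0,0}`
is a bracket once `Γ ≠ 0`. The corrected cocycle is then `ad L_{0,0}`-invariant, and since
the chains are infinite upwards, an invariant bilinear form vanishes on every pair of basis
vectors by induction on the indices.
-/

open LieAlgebra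

section Recurrence

variable {K : Type*} [Field K] [CharZero K]

theorem eq_zero_of_forall_recurrence {c : K} {F : ℕ → ℕ → K}
    (h : ∀ i j : ℕ, c * F i j + i * F (i - 1) j + j * F i (j - 1) = 0) (i j : ℕ) :
    F i j = 0 := by
  rcases eq_or_ne c 0 with rfl | hc
  · -- for `c = 0` the equation at `(i + 1, j)` determines `F i j` from `F (i + 1) (j - 1)`
    induction j generalizing i with
    | zero =>
      have h₀ := h (i + 1) 0
      simp only [zero_mul, zero_add, Nat.add_sub_cancel, CharP.cast_eq_zero, add_zero] at h₀
      exact (mul_eq_zero.mp h₀).resolve_left (Nat.cast_ne_zero.mpr i.succ_ne_zero)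
    | succ j ih =>
      have h₀ := h (i + 1) (j + 1)
      simp only [zero_mul, zero_add, Nat.add_sub_cancel, ih (i + 1), mul_zero, add_zero] at h₀
      exact (mul_eq_zero.mp h₀).resolve_left (Nat.cast_ne_zero.mpr i.succ_ne_zero)
  · suffices ∀ n i j, i + j = n → F i j = 0 from this _ i j rfl
    intro n
    induction n using Nat.strong_induction_on with
    | _ n ih =>
      rintro i j rfl
      have hi : (i : K) * F (i - 1) j = 0 := by
        rcases i with _ | i
        · simp
        · rw [Nat.add_sub_cancel, ih (i + j) (by omega) i j rfl, mul_zero]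
      have hj : (j : K) * F i (j - 1) = 0 := by
        rcases j with _ | j
        · simp
        · rw [Nat.add_sub_cancel, ih (i + j) (by omega) i j rfl, mul_zero]
      exact (mul_eq_zero.mp (by linear_combination h i j - hi - hj)).resolve_left hc

theorem exists_forall_recurrence_eq (c : K) (q : ℕ → K) (hq : c = 0 → q 0 = 0) :
    ∃ g : ℕ → K, ∀ i : ℕ, c * g i + i * g (i - 1) = q i := by
  rcases eq_or_ne c 0 with rfl | hc
  · refine ⟨fun n => q (n + 1) / (n + 1), fun i => ?_⟩
    rcases i with _ | n
    · simpa using (hq rfl).symm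
    · rw [zero_mul, zero_add, Nat.add_sub_cancel, Nat.cast_succ]
      exact mul_div_cancel₀ _ (Nat.cast_add_one_ne_zero n)
  · let g : ℕ → K := fun n => Nat.rec (q 0 / c) (fun n gn => (q (n + 1) - (n + 1) * gn) / c) n
    refine ⟨g, fun i => ?_⟩
    rcases i with _ | n
    · show c * (q 0 / c) + ((0 : ℕ) : K) * g 0 = q 0
      rw [Nat.cast_zero, zero_mul, add_zero, mul_div_cancel₀ _ hc]
    · show c * ((q (n + 1) - (n + 1) * g n) / c) + ((n + 1 : ℕ) : K) * g n = q (n + 1)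
      push_cast
      field_simp
      ring

end Recurrence

section JordanChain

variable {K V κ : Type*} [Field K] [CharZero K] [AddCommGroup V] [Module K V]
  {b : Module.Basis (κ × ℕ) K V} {D : V →ₗ[K] V} {w : κ → K}

theorem exists_eq_comp_of_weight_eq_zero
    (hD : ∀ s i, D (b (s, i)) = w s • b (s, i) + (i : K) • b (s, i - 1))
    (φ : V →ₗ[K] K) (hφ : ∀ s, w s = 0 → φ (b (s, 0)) = 0) :
    ∃ f : V →ₗ[K] K, ∀ v, φ v = f (D v) := by
  choose g hg using fun s => exists_forall_recurrence_eq (w s) (fun i => φ (b (s, i))) (hφ s)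
  let f := b.constr K fun p => g p.1 p.2
  have hφf : φ = f ∘ₗ D := b.ext fun ⟨s, i⟩ => by
    simp [f, hD, Module.Basis.constr_basis, ← hg s i]
  exact ⟨f, fun v => LinearMap.congr_fun hφf v⟩

theorem eq_zero_of_invariant
    (hD : ∀ s i, D (b (s, i)) = w s • b (s, i) + (i : K) • b (s, i - 1))
    {Φ : V →ₗ[K] V →ₗ[K] K} (hΦ : ∀ x y, Φ (D x) y + Φ x (D y) = 0) : Φ = 0 := by
  refine LinearMap.ext_basis b b fun ⟨s, i⟩ ⟨t, j⟩ => ?_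
  rw [LinearMap.zero_apply, LinearMap.zero_apply]
  refine eq_zero_of_forall_recurrence (c := w s + w t)
    (F := fun i j => Φ (b (s, i)) (b (t, j))) (fun i j => ?_) i j
  have h := hΦ (b (s, i)) (b (t, j))
  simp only [hD, map_add, map_smul, LinearMap.add_apply, LinearMap.smul_apply,
    smul_eq_mul] at h
  linear_combination h

end JordanChain

section TwoCocycle

variable {R L : Type*} [CommRing R] [LieRing L] [LieAlgebra R L]

structure IsTwoCocycle (ψ : L →ₗ[R] L →ₗ[R] R) : Prop where
  skew : ∀ x y, ψ x y = -ψ y x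
  cocycle : ∀ x y z, ψ x ⁅y, z⁆ + ψ y ⁅z, x⁆ + ψ z ⁅x, y⁆ = 0

variable (R) in
def coboundary (f : L →ₗ[R] R) : L →ₗ[R] L →ₗ[R] R :=
  (ad R L : L →ₗ[R] Module.End R L).compr₂ f

@[simp]
theorem coboundary_apply (f : L →ₗ[R] R) (x y : L) : coboundary R f x y = f ⁅x, y⁆ := rfl

namespace IsTwoCocycle

variable {ψ : L →ₗ[R] L →ₗ[R] R}

theorem sub_coboundary (hψ : IsTwoCocycle ψ) (f : L →ₗ[R] R) :
    IsTwoCocycle (ψ - coboundary R f) where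
  skew x y := by
    simp only [LinearMap.sub_apply, coboundary_apply, hψ.skew x y, ← lie_skew y x, map_neg]
    ring
  cocycle x y z := by
    have hJ : f ⁅x, ⁅y, z⁆⁆ + f ⁅y, ⁅z, x⁆⁆ + f ⁅z, ⁅x, y⁆⁆ = 0 := by
      rw [← map_add, ← map_add, lie_jacobi, map_zero]
    simp only [LinearMap.sub_apply, coboundary_apply]
    linear_combination hψ.cocycle x y z - hJ

theorem apply_lie_add_apply_lie_eq_zero (hψ : IsTwoCocycle ψ) {x₀ : L}
    (h : ∀ v, ψ x₀ v = 0) (x y : L) : ψ ⁅x₀, x⁆ y + ψ x ⁅x₀, y⁆ = 0 := by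
  have h₁ : ψ x ⁅y, x₀⁆ = -ψ x ⁅x₀, y⁆ := by rw [← lie_skew, map_neg]
  linear_combination h _ - hψ.cocycle x₀ x y + h₁ + hψ.skew y ⁅x₀, x⁆

theorem apply_lie_eq_zero_of_central (hψ : IsTwoCocycle ψ) {z : L} (hz : ∀ v : L, ⁅v, z⁆ = 0)
    (a b : L) : ψ ⁅a, b⁆ z = 0 := by
  have hza : ⁅z, a⁆ = 0 := by rw [← lie_skew, hz, neg_zero]
  have h₀ := hψ.cocycle a b z
  rw [hz, hza, map_zero, map_zero, zero_add, zero_add, hψ.skew] at h₀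
  exact neg_eq_zero.mp h₀

end IsTwoCocycle

end TwoCocycle

namespace HVData

variable {Γ : AddSubgroup ℂ} {V : Type*} [LieRing V] [LieAlgebra ℂ V] (hv : HVData Γ V)

theorem lie_H_zero_zero (v : V) : ⁅v, hv.H 0 0⁆ = 0 := by
  suffices ad ℂ V (hv.H 0 0) = 0 by
    rw [← lie_skew, ← ad_apply (R := ℂ), this, LinearMap.zero_apply, neg_zero]
  refine hv.basis.ext fun s => ?_
  rcases s with ⟨β, j⟩ | ⟨β, j⟩
  · rw [LinearMap.zero_apply, ad_apply, hv.basis_inl, ← lie_skew, hv.lie_L_H]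
    simp
  · simp [hv.basis_inr, hv.lie_H_H]

theorem exists_lie_eq_L_zero_zero (hΓ : Γ ≠ ⊥) : ∃ a b : V, ⁅a, b⁆ = hv.L 0 0 := by
  obtain ⟨γ, hγ⟩ := AddSubgroup.ne_bot_iff_exists_ne_zero.mp hΓ
  have hγ' : -(γ : ℂ) - γ ≠ 0 := by
    have : (γ : ℂ) ≠ 0 := by simpa using hγ
    contrapose! this
    linear_combination -this / 2
  refine ⟨(-(γ : ℂ) - γ)⁻¹ • hv.L γ 0, hv.L (-γ) 0, ?_⟩
  rw [smul_lie, hv.lie_L_L]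
  simp [inv_smul_smul₀ hγ']

noncomputable def chainBasis : Module.Basis ((Γ ⊕ Γ) × ℕ) ℂ V :=
  hv.basis.reindex (Equiv.sumProdDistrib Γ Γ ℕ).symm

@[simp]
theorem chainBasis_inl (α : Γ) (i : ℕ) : hv.chainBasis (Sum.inl α, i) = hv.L α i := by
  simp [chainBasis, hv.basis_inl]

@[simp]
theorem chainBasis_inr (α : Γ) (i : ℕ) : hv.chainBasis (Sum.inr α, i) = hv.H α i := by
  simp [chainBasis, hv.basis_inr]

theorem lie_L_zero_zero_chainBasis (s : Γ ⊕ Γ) (i : ℕ) :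
    ⁅hv.L 0 0, hv.chainBasis (s, i)⁆ =
      (Sum.elim (↑) (↑) s : ℂ) • hv.chainBasis (s, i) + (i : ℂ) • hv.chainBasis (s, i - 1) := by
  rcases s with α | α
  · simp [hv.lie_L_L]
  · simp [hv.lie_L_H]

end HVData

/-- `H²(HV, ℂ) = 0`: every 2-cocycle on `HV` is a 2-coboundary, i.e. for
every bilinear skew-symmetric `ψ` satisfying the cocycle identity there is a linear
`f : HV → ℂ` with `ψ(x,y) = f([x,y])`; hence `HV` has no nontrivial one-dimensional central
extensions. -/
theorem HV_second_cohomology_trivial (Γ : AddSubgroup ℂ) (hΓ : Γ ≠ ⊥)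
    {V : Type*} [LieRing V] [LieAlgebra ℂ V] (hv : HVData Γ V)
    (ψ : V →ₗ[ℂ] V →ₗ[ℂ] ℂ)
    (hskew : ∀ x y : V, ψ x y = - ψ y x)
    (hcocycle : ∀ x y z : V, ψ x ⁅y, z⁆ + ψ y ⁅z, x⁆ + ψ z ⁅x, y⁆ = 0) :
    ∃ f : V →ₗ[ℂ] ℂ, ∀ x y : V, ψ x y = f ⁅x, y⁆ := by
  have hψ : IsTwoCocycle ψ := ⟨hskew, hcocycle⟩
  have hD := hv.lie_L_zero_zero_chainBasis
  have hLH : ψ (hv.L 0 0) (hv.H 0 0) = 0 := by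
    obtain ⟨a, b, hab⟩ := hv.exists_lie_eq_L_zero_zero hΓ
    exact hab ▸ hψ.apply_lie_eq_zero_of_central hv.lie_H_zero_zero a b
  have hLL : ψ (hv.L 0 0) (hv.L 0 0) = 0 := by linear_combination hskew _ _ / 2
  obtain ⟨f, hf⟩ := exists_eq_comp_of_weight_eq_zero (D := ad ℂ V (hv.L 0 0)) hD
    (ψ (hv.L 0 0)) (by rintro (β | β) hβ <;> obtain rfl : β = 0 := Subtype.ext hβ <;> simpa)
  have hΦ0 : ψ - coboundary ℂ f = 0 :=
    eq_zero_of_invariant (D := ad ℂ V (hv.L 0 0)) hD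
      ((hψ.sub_coboundary f).apply_lie_add_apply_lie_eq_zero fun v => by simp [hf])
  exact ⟨f, fun x y => sub_eq_zero.mp (LinearMap.congr_fun₂ hΦ0 x y)⟩
end

section
/- Assume 1 ∈ Γ. For every 2-cocycle ψ on HV there exists a linear function f: HV → ℂ such that the 2-cocycle φ = ψ − ψ_f satisfies φ(L_{α,i}, H_{β,j}) = 0 for all α, β ∈ Γ and i, j ∈ ℤ₊. -/
/-!
Since `ad L_{0,0}` acts by `L_{a,i} ↦ a L_{a,i} + i L_{a,i-1}` and `H_{b,k} ↦ b H_{b,k} + k H_{b,k-1}`,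
the cocycle identity for `(L_{0,0}, L_{a,i}, H_{b,k})` reads
`(a+b) ψ(L_{a,i},H_{b,k}) + k ψ(L_{a,i},H_{b,k-1}) + i ψ(L_{a,i-1},H_{b,k}) = ψ(L_{0,0},[L_{a,i},H_{b,k}])`.
Solving `d c_{d,m} + m c_{d,m-1} = ψ(L_{0,0},H_{d,m})` recursively in `m` (at `d = m = 0` this needs
`ψ(L_{0,0},H_{0,0}) = 0`, the identity at `a = -b ≠ 0`) and putting `f(H_{d,m}) = c_{d,m}` makes the
right-hand side vanish for `ψ - ψ_f`; the homogeneous recursion then forces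
`(ψ - ψ_f)(L_{a,i},H_{b,k}) = 0` by induction on `i` and `k`.
-/

section LoweringRecursion

variable {K : Type*} [Field K] [CharZero K]

theorem eq_zero_of_lowering_recursion {s : K} {g : ℕ → ℕ → K}
    (h : ∀ i k, s * g i k + k * g i (k - 1) + i * g (i - 1) k = 0) (i k : ℕ) : g i k = 0 := by
  rcases eq_or_ne s 0 with rfl | hs
  · induction i generalizing k with
    | zero => simpa [Nat.cast_add_one_ne_zero] using h 0 (k + 1)
    | succ i ih => simpa [ih, Nat.cast_add_one_ne_zero] using h (i + 1) (k + 1)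
  · induction i generalizing k with
    | zero =>
      induction k with
      | zero => simpa [hs] using h 0 0
      | succ k ihk => simpa [ihk, hs] using h 0 (k + 1)
    | succ i ih =>
      induction k with
      | zero => simpa [ih, hs] using h (i + 1) 0
      | succ k ihk => simpa [ih, ihk, hs] using h (i + 1) (k + 1)

theorem exists_lowering_preimage (s : K) (φ : ℕ → K) (h0 : s = 0 → φ 0 = 0) :
    ∃ c : ℕ → K, ∀ m, s * c m + m * c (m - 1) = φ m := by
  rcases eq_or_ne s 0 with rfl | hs
  · refine ⟨fun m => φ (m + 1) / (m + 1), fun m => ?_⟩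
    cases m with
    | zero => simp [h0 rfl]
    | succ m => simp [mul_div_cancel₀, Nat.cast_add_one_ne_zero]
  · refine ⟨fun m => Nat.rec (φ 0 / s) (fun m c => (φ (m + 1) - (m + 1) * c) / s) m, fun m => ?_⟩
    cases m with
    | zero => simp [mul_div_cancel₀, hs]
    | succ m => simp [mul_div_cancel₀, hs]

end LoweringRecursion

section LieTwoCocycle

variable {R L : Type*} [CommRing R] [LieRing L] [LieAlgebra R L]

structure IsLieTwoCocycle (ψ : L →ₗ[R] L →ₗ[R] R) : Prop where
  skew : ∀ x y, ψ x y = -ψ y x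
  cyclic : ∀ x y z, ψ x ⁅y, z⁆ + ψ y ⁅z, x⁆ + ψ z ⁅x, y⁆ = 0

def lieCoboundary (f : L →ₗ[R] R) : L →ₗ[R] L →ₗ[R] R :=
  (LieModule.toEnd R L L : L →ₗ[R] Module.End R L).compr₂ f

@[simp]
theorem lieCoboundary_apply (f : L →ₗ[R] R) (x y : L) : lieCoboundary f x y = f ⁅x, y⁆ :=
  rfl

theorem isLieTwoCocycle_lieCoboundary (f : L →ₗ[R] R) : IsLieTwoCocycle (lieCoboundary f) where
  skew x y := by rw [lieCoboundary_apply, lieCoboundary_apply, ← lie_skew, map_neg]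
  cyclic x y z := by simp only [lieCoboundary_apply, ← map_add, lie_jacobi, map_zero]

namespace IsLieTwoCocycle

variable {ψ φ : L →ₗ[R] L →ₗ[R] R}

theorem sub (hψ : IsLieTwoCocycle ψ) (hφ : IsLieTwoCocycle φ) : IsLieTwoCocycle (ψ - φ) where
  skew x y := by simp only [LinearMap.sub_apply, hψ.skew x y, hφ.skew x y]; ring
  cyclic x y z := by
    simp only [LinearMap.sub_apply]
    linear_combination hψ.cyclic x y z - hφ.cyclic x y z

theorem apply_lie (hψ : IsLieTwoCocycle ψ) (x y z : L) :
    ψ x ⁅y, z⁆ = ψ ⁅x, y⁆ z + ψ y ⁅x, z⁆ := by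
  rw [hψ.skew ⁅x, y⁆, ← lie_skew x z, map_neg]
  linear_combination hψ.cyclic x y z

end IsLieTwoCocycle

end LieTwoCocycle

namespace HVData

variable {Γ : AddSubgroup ℂ} {V : Type*} [LieRing V] [LieAlgebra ℂ V] (hv : HVData Γ V)

theorem lie_L_zero_L (a : Γ) (i : ℕ) :
    ⁅hv.L 0 0, hv.L a i⁆ = (a : ℂ) • hv.L a i + (i : ℂ) • hv.L a (i - 1) := by
  simp [hv.lie_L_L]

theorem lie_L_zero_H (b : Γ) (k : ℕ) :
    ⁅hv.L 0 0, hv.H b k⁆ = (b : ℂ) • hv.H b k + (k : ℂ) • hv.H b (k - 1) := by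
  simp [hv.lie_L_H]

variable {ψ : V →ₗ[ℂ] V →ₗ[ℂ] ℂ}

theorem cocycle_L_H_recursion (hψ : IsLieTwoCocycle ψ) (a b : Γ) (i k : ℕ) :
    ((a : ℂ) + b) * ψ (hv.L a i) (hv.H b k) + k * ψ (hv.L a i) (hv.H b (k - 1))
        + i * ψ (hv.L a (i - 1)) (hv.H b k) = ψ (hv.L 0 0) ⁅hv.L a i, hv.H b k⁆ := by
  rw [hψ.apply_lie, lie_L_zero_L, lie_L_zero_H]
  simp only [map_add, map_smul, LinearMap.add_apply, LinearMap.smul_apply, smul_eq_mul]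
  ring

theorem cocycle_L_zero_H_zero (hΓ : Γ ≠ ⊥) (hψ : IsLieTwoCocycle ψ) :
    ψ (hv.L 0 0) (hv.H 0 0) = 0 := by
  obtain ⟨γ, hγ⟩ := AddSubgroup.ne_bot_iff_exists_ne_zero.mp hΓ
  have h := hv.cocycle_L_H_recursion hψ γ (-γ) 0 0
  rw [hv.lie_L_H, add_neg_cancel] at h
  simpa [hγ] using h

theorem cocycle_L_H_eq_zero (hψ : IsLieTwoCocycle ψ)
    (h : ∀ (d : Γ) (m : ℕ), ψ (hv.L 0 0) (hv.H d m) = 0) (a b : Γ) (i k : ℕ) :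
    ψ (hv.L a i) (hv.H b k) = 0 := by
  refine eq_zero_of_lowering_recursion (s := (a : ℂ) + b)
    (g := fun i k => ψ (hv.L a i) (hv.H b k)) (fun i k => ?_) i k
  rw [hv.cocycle_L_H_recursion hψ, hv.lie_L_H]
  simp [h]

theorem exists_lieCoboundary_eq_on_L_zero_H (hΓ : Γ ≠ ⊥) (hψ : IsLieTwoCocycle ψ) :
    ∃ f : V →ₗ[ℂ] ℂ, ∀ (d : Γ) (m : ℕ),
      lieCoboundary f (hv.L 0 0) (hv.H d m) = ψ (hv.L 0 0) (hv.H d m) := by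
  have hc (d : Γ) := exists_lowering_preimage (d : ℂ) (fun m => ψ (hv.L 0 0) (hv.H d m))
    fun hd => by rw [ZeroMemClass.coe_eq_zero.mp hd]; exact hv.cocycle_L_zero_H_zero hΓ hψ
  choose c hc using hc
  refine ⟨hv.basis.constr ℂ (Sum.elim 0 fun p => c p.1 p.2), fun d m => ?_⟩
  rw [lieCoboundary_apply, lie_L_zero_H, map_add, map_smul, map_smul, ← hv.basis_inr d m,
    ← hv.basis_inr d (m - 1), Module.Basis.constr_basis, Module.Basis.constr_basis, hv.basis_inr]
  exact hc d m

end HVData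

theorem HV_cocycle_L_H_vanishes_general (Γ : AddSubgroup ℂ) (hΓ : Γ ≠ ⊥)
    {V : Type*} [LieRing V] [LieAlgebra ℂ V] (hv : HVData Γ V)
    (ψ : V →ₗ[ℂ] V →ₗ[ℂ] ℂ)
    (hskew : ∀ x y : V, ψ x y = - ψ y x)
    (hcocycle : ∀ x y z : V, ψ x ⁅y, z⁆ + ψ y ⁅z, x⁆ + ψ z ⁅x, y⁆ = 0) :
    ∃ f : V →ₗ[ℂ] ℂ, ∀ (α β : Γ) (i j : ℕ),
      ψ (hv.L α i) (hv.H β j) - f ⁅hv.L α i, hv.H β j⁆ = 0 := by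
  have hψ : IsLieTwoCocycle ψ := ⟨hskew, hcocycle⟩
  obtain ⟨f, hf⟩ := hv.exists_lieCoboundary_eq_on_L_zero_H hΓ hψ
  exact ⟨f, hv.cocycle_L_H_eq_zero (hψ.sub (isLieTwoCocycle_lieCoboundary f))
    fun d m => by simp [hf]⟩

/-- Assume `1 ∈ Γ`.  For every 2-cocycle `ψ` on `HV` there is a linear
`f : HV → ℂ` such that `φ = ψ - ψ_f` satisfies `φ(L_{α,i}, H_{β,j}) = 0` for all
`α, β ∈ Γ` and `i, j ∈ ℤ₊`. -/
theorem HV_cocycle_L_H_vanishes (Γ : AddSubgroup ℂ) (hΓ : Γ ≠ ⊥) (h1 : (1 : ℂ) ∈ Γ)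
    {V : Type*} [LieRing V] [LieAlgebra ℂ V] (hv : HVData Γ V)
    (ψ : V →ₗ[ℂ] V →ₗ[ℂ] ℂ)
    (hskew : ∀ x y : V, ψ x y = - ψ y x)
    (hcocycle : ∀ x y z : V, ψ x ⁅y, z⁆ + ψ y ⁅z, x⁆ + ψ z ⁅x, y⁆ = 0) :
    ∃ f : V →ₗ[ℂ] ℂ, ∀ (α β : Γ) (i j : ℕ),
      ψ (hv.L α i) (hv.H β j) - f ⁅hv.L α i, hv.H β j⁆ = 0 :=
  HV_cocycle_L_H_vanishes_general Γ hΓ hv ψ hskew hcocycle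
end

section
/- Assume 1 ∈ Γ. For every 2-cocycle ψ on HV there exists a linear function f: HV → ℂ such that the 2-cocycle φ = ψ − ψ_f satisfies φ(H_{α,i}, H_{β,j}) = 0 for all α, β ∈ Γ and i, j ∈ ℤ₊. -/
/-!
Since `H` is abelian, the claim is that `ψ` itself vanishes on `H × H` (and `f = 0` works).
The cocycle identity for `H_{α,i}`, `H_{β,j}` and `L_{0,k}`, with `k = 0, 1`, gives two linear
recurrences for `g i j = ψ(H_{α,i}, H_{β,j})`, and `g` vanishes by induction on `i + j`.
If `α + β ≠ 0`, the `k = 0` recurrence expresses `g i j` through lower terms. If `α + β = 0`,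
the `k = 0` recurrence at `(i + 1, j + 1)` reads `(j + 1) g (i+1) j + (i + 1) g i (j+1) = 0`,
while the `k = 1` recurrence gives `g (i+1) j = g i (j+1)` (when `α ≠ 0`) or
`(i + j) g i j = 0` (when `α = β = 0`).
-/

section Recurrences

variable {a b : ℂ} {g : ℕ → ℕ → ℂ} {i j : ℕ}

theorem eq_zero_of_lower_of_add_ne_zero (hab : a + b ≠ 0)
    (h₁ : ∀ i j : ℕ, (a + b) * g i j + j * g i (j - 1) + i * g (i - 1) j = 0)
    (hlow : ∀ i' j', i' + j' < i + j → g i' j' = 0) : g i j = 0 := by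
  have hj : (j : ℂ) * g i (j - 1) = 0 := by
    rcases j with _ | j
    · simp
    · rw [Nat.add_sub_cancel, hlow i j (by omega), mul_zero]
  have hi : (i : ℂ) * g (i - 1) j = 0 := by
    rcases i with _ | i
    · simp
    · rw [Nat.add_sub_cancel, hlow i j (by omega), mul_zero]
  exact (mul_eq_zero_iff_left hab).mp (by linear_combination h₁ i j - hj - hi)

theorem eq_zero_of_lower_of_add_eq_zero (hab : a + b = 0)
    (h₁ : ∀ i j : ℕ, (a + b) * g i j + j * g i (j - 1) + i * g (i - 1) j = 0)
    (h₂ : ∀ i j : ℕ, b * g i (j + 1) + a * g (i + 1) j + (i + j) * g i j = 0)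
    (hlow : ∀ i' j', i' + j' < i + j → g i' j' = 0) : g i j = 0 := by
  have hr := h₁ i (j + 1)
  rw [hab, Nat.add_sub_cancel] at hr
  push_cast at hr
  rcases i with _ | i
  · exact (mul_eq_zero_iff_left (Nat.cast_add_one_ne_zero j)).mp (by simpa using hr)
  by_cases ha : a = 0
  · have hb : b = 0 := by linear_combination hab - ha
    have hr₂ := h₂ (i + 1) j
    rw [ha, hb] at hr₂
    push_cast at hr₂
    have hpos : (i : ℂ) + 1 + j ≠ 0 := by exact_mod_cast (by omega : i + 1 + j ≠ 0)
    exact (mul_eq_zero_iff_left hpos).mp (by linear_combination hr₂)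
  · have hshift : g (i + 1) j = g i (j + 1) := by
      have hr₂ := h₂ i j
      rw [hlow i j (by omega)] at hr₂
      refine sub_eq_zero.mp ((mul_eq_zero_iff_left ha).mp ?_)
      linear_combination hr₂ - g i (j + 1) * hab
    rw [Nat.add_sub_cancel, ← hshift] at hr
    push_cast at hr
    have hpos : (i : ℂ) + j + 2 ≠ 0 := by exact_mod_cast (by omega : i + j + 2 ≠ 0)
    exact (mul_eq_zero_iff_left hpos).mp (by linear_combination hr)

theorem eq_zero_of_recurrences
    (h₁ : ∀ i j : ℕ, (a + b) * g i j + j * g i (j - 1) + i * g (i - 1) j = 0)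
    (h₂ : ∀ i j : ℕ, b * g i (j + 1) + a * g (i + 1) j + (i + j) * g i j = 0)
    (i j : ℕ) : g i j = 0 := by
  induction hn : i + j using Nat.strong_induction_on generalizing i j with
  | _ n ih =>
    subst hn
    have hlow : ∀ i' j', i' + j' < i + j → g i' j' = 0 := fun i' j' hlt => ih _ hlt i' j' rfl
    by_cases hab : a + b = 0
    · exact eq_zero_of_lower_of_add_eq_zero hab h₁ h₂ hlow
    · exact eq_zero_of_lower_of_add_ne_zero hab h₁ hlow

end Recurrences

namespace HVData

variable {Γ : AddSubgroup ℂ} {V : Type*} [LieRing V] [LieAlgebra ℂ V]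

theorem cocycle_H_H_relation (hv : HVData Γ V) {ψ : V →ₗ[ℂ] V →ₗ[ℂ] ℂ}
    (hskew : ∀ x y : V, ψ x y = - ψ y x)
    (hcocycle : ∀ x y z : V, ψ x ⁅y, z⁆ + ψ y ⁅z, x⁆ + ψ z ⁅x, y⁆ = 0)
    (α β : Γ) (i j k : ℕ) :
    (β : ℂ) * ψ (hv.H α i) (hv.H β (j + k)) + j * ψ (hv.H α i) (hv.H β (j + k - 1))
      + (α : ℂ) * ψ (hv.H α (i + k)) (hv.H β j)
      + i * ψ (hv.H α (i + k - 1)) (hv.H β j) = 0 := by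
  have hc := hcocycle (hv.H α i) (hv.H β j) (hv.L 0 k)
  rw [← lie_skew, hv.lie_L_H, hv.lie_L_H, hv.lie_H_H, zero_add, add_comm k, add_comm k] at hc
  simp only [map_add, map_smul, map_neg, map_zero, smul_eq_mul, neg_add, add_zero, zero_add] at hc
  linear_combination -hc + (α : ℂ) * hskew (hv.H β j) (hv.H α (i + k))
    + (i : ℂ) * hskew (hv.H β j) (hv.H α (i + k - 1))

theorem cocycle_H_H_eq_zero (hv : HVData Γ V) {ψ : V →ₗ[ℂ] V →ₗ[ℂ] ℂ}
    (hskew : ∀ x y : V, ψ x y = - ψ y x)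
    (hcocycle : ∀ x y z : V, ψ x ⁅y, z⁆ + ψ y ⁅z, x⁆ + ψ z ⁅x, y⁆ = 0)
    (α β : Γ) (i j : ℕ) : ψ (hv.H α i) (hv.H β j) = 0 := by
  refine eq_zero_of_recurrences (a := α) (b := β) (g := fun i j => ψ (hv.H α i) (hv.H β j))
    (fun i j => ?_) (fun i j => ?_) i j
  · linear_combination hv.cocycle_H_H_relation hskew hcocycle α β i j 0
  · have h := hv.cocycle_H_H_relation hskew hcocycle α β i j 1
    rw [Nat.add_sub_cancel, Nat.add_sub_cancel] at h
    linear_combination h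

end HVData

theorem HV_cocycle_H_H_vanishes_general (Γ : AddSubgroup ℂ)
    {V : Type*} [LieRing V] [LieAlgebra ℂ V] (hv : HVData Γ V)
    (ψ : V →ₗ[ℂ] V →ₗ[ℂ] ℂ)
    (hskew : ∀ x y : V, ψ x y = - ψ y x)
    (hcocycle : ∀ x y z : V, ψ x ⁅y, z⁆ + ψ y ⁅z, x⁆ + ψ z ⁅x, y⁆ = 0) :
    ∃ f : V →ₗ[ℂ] ℂ, ∀ (α β : Γ) (i j : ℕ),
      ψ (hv.H α i) (hv.H β j) - f ⁅hv.H α i, hv.H β j⁆ = 0 :=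
  ⟨0, fun α β i j => by
    rw [LinearMap.zero_apply, sub_zero, hv.cocycle_H_H_eq_zero hskew hcocycle]⟩

/-- Assume `1 ∈ Γ`.  For every 2-cocycle `ψ` on `HV` there is a linear
`f : HV → ℂ` such that `φ = ψ - ψ_f` satisfies `φ(H_{α,i}, H_{β,j}) = 0` for all
`α, β ∈ Γ` and `i, j ∈ ℤ₊`. -/
theorem HV_cocycle_H_H_vanishes (Γ : AddSubgroup ℂ) (hΓ : Γ ≠ ⊥) (h1 : (1 : ℂ) ∈ Γ)
    {V : Type*} [LieRing V] [LieAlgebra ℂ V] (hv : HVData Γ V)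
    (ψ : V →ₗ[ℂ] V →ₗ[ℂ] ℂ)
    (hskew : ∀ x y : V, ψ x y = - ψ y x)
    (hcocycle : ∀ x y z : V, ψ x ⁅y, z⁆ + ψ y ⁅z, x⁆ + ψ z ⁅x, y⁆ = 0) :
    ∃ f : V →ₗ[ℂ] ℂ, ∀ (α β : Γ) (i j : ℕ),
      ψ (hv.H α i) (hv.H β j) - f ⁅hv.H α i, hv.H β j⁆ = 0 :=
  HV_cocycle_H_H_vanishes_general Γ hv ψ hskew hcocycle
end
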